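/- arXiv:0809.3815 — 3 statements merged into one kernel-verified Lean document; each statement's English description precedes it below -/
import Mathlib

section
/- Let V be a variety and suppose (N = 2k, n, sᵢ, tᵢ, L_α, R_α) witness the BFC Mal'cev condition for V. Then V ⊨ Φ₂(x,y,x,y); that is, every algebra A in V and all a,b ∈ A satisfy A ⊨ Φ₂(a,b,a,b). -/
set_option linter.unusedVariables false

namespace UA

/-- A purely functional first-order signature (language). -/
structure Sig where
  ops : Type
  ar : ops → ℕ

/-- An algebra over a signature: a carrier together with interpretations of
the basic operations. -/
structure Alg (S : Sig) where
  carrier : Type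
  interp : ∀ f : S.ops, (Fin (S.ar f) → carrier) → carrier

/-- Terms over a signature, with variables in `V`. -/
inductive Tm (S : Sig) (V : Type) : Type
  | var : V → Tm S V
  | app : ∀ f : S.ops, (Fin (S.ar f) → Tm S V) → Tm S V

/-- Evaluation of a term in an algebra, under an assignment of the variables. -/
def Tm.eval {S : Sig} {V : Type} (A : Alg S) (v : V → A.carrier) : Tm S V → A.carrier
  | .var i => v i
  | .app f ts => A.interp f (fun i => Tm.eval A v (ts i))

/-- An algebra satisfies an identity (a universally quantified equation between
two terms in variables `ℕ`). -/
def Alg.satisfies {S : Sig} (A : Alg S) (e : Tm S ℕ × Tm S ℕ) : Prop :=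
  ∀ v : ℕ → A.carrier, Tm.eval A v e.1 = Tm.eval A v e.2

/-- Membership in the variety axiomatized by the set of equations `E`. -/
def InV {S : Sig} (E : Set (Tm S ℕ × Tm S ℕ)) (A : Alg S) : Prop :=
  ∀ e ∈ E, A.satisfies e

/-- A congruence of an algebra: an equivalence relation compatible with all
basic operations. -/
structure Con {S : Sig} (A : Alg S) where
  rel : A.carrier → A.carrier → Prop
  refl : ∀ a, rel a a
  symm : ∀ a b, rel a b → rel b a
  trans : ∀ a b c, rel a b → rel b c → rel a c
  compat : ∀ (f : S.ops) (ts us : Fin (S.ar f) → A.carrier),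
      (∀ i, rel (ts i) (us i)) → rel (A.interp f ts) (A.interp f us)

/-- The trivial (equality) congruence Δ. -/
def conDelta {S : Sig} (A : Alg S) : Con A where
  rel a b := a = b
  refl _ := rfl
  symm _ _ h := h.symm
  trans _ _ _ h₁ h₂ := h₁.trans h₂
  compat f ts us h := congrArg (A.interp f) (funext h)

/-- The total congruence ∇. -/
def conNabla {S : Sig} (A : Alg S) : Con A where
  rel _ _ := True
  refl _ := trivial
  symm _ _ _ := trivial
  trans _ _ _ _ _ := trivial
  compat _ _ _ _ := trivial

/-- The congruence generated by a set of pairs. -/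
def cg {S : Sig} {A : Alg S} (s : Set (A.carrier × A.carrier)) : Con A where
  rel a b := ∀ θ : Con A, (∀ p ∈ s, θ.rel p.1 p.2) → θ.rel a b
  refl a := fun θ _ => θ.refl a
  symm _ _ h := fun θ hs => θ.symm _ _ (h θ hs)
  trans _ _ _ h₁ h₂ := fun θ hs => θ.trans _ _ _ (h₁ θ hs) (h₂ θ hs)
  compat f ts us h := fun θ hs => θ.compat f ts us (fun i => h i θ hs)

/-- The principal congruence generated by a pair. -/
def cgPair {S : Sig} (A : Alg S) (a b : A.carrier) : Con A := cg {(a, b)}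

/-- Meet (intersection) in the congruence lattice. -/
def Con.inf {S : Sig} {A : Alg S} (θ φ : Con A) : Con A where
  rel a b := θ.rel a b ∧ φ.rel a b
  refl a := ⟨θ.refl a, φ.refl a⟩
  symm _ _ h := ⟨θ.symm _ _ h.1, φ.symm _ _ h.2⟩
  trans _ _ _ h₁ h₂ := ⟨θ.trans _ _ _ h₁.1 h₂.1, φ.trans _ _ _ h₁.2 h₂.2⟩
  compat f ts us h :=
    ⟨θ.compat f ts us fun i => (h i).1, φ.compat f ts us fun i => (h i).2⟩

/-- Join in the congruence lattice. -/
def Con.sup {S : Sig} {A : Alg S} (θ φ : Con A) : Con A :=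
  cg {p | θ.rel p.1 p.2 ∨ φ.rel p.1 p.2}

/-- Join of a family in the congruence lattice. -/
def Con.iSup {S : Sig} {A : Alg S} {ι : Type} (f : ι → Con A) : Con A :=
  cg {p | ∃ i, (f i).rel p.1 p.2}

/-- Inclusion of congruences. -/
def conLE {S : Sig} {A : Alg S} (θ φ : Con A) : Prop := ∀ a b, θ.rel a b → φ.rel a b

/-- Relational composition `r ∘ s`. -/
def relComp {α : Type} (r s : α → α → Prop) : α → α → Prop :=
  fun a b => ∃ c, r a c ∧ s c b

/-- `θ` and `θs` are complementary factor congruences: θ ∩ θ* = Δ and θ ∘ θ* = ∇. -/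
def AreCompFC {S : Sig} {A : Alg S} (θ θs : Con A) : Prop :=
  (∀ a b, θ.rel a b → θs.rel a b → a = b) ∧ (∀ a b, relComp θ.rel θs.rel a b)

/-- The set of factor congruences of an algebra. -/
def FC {S : Sig} (A : Alg S) : Set (Con A) := {θ | ∃ θs, AreCompFC θ θs}

/-- `FC(A)` is a distributive sublattice of `Con(A)`. -/
def HasBFC {S : Sig} (A : Alg S) : Prop :=
  (∀ θ φ, θ ∈ FC A → φ ∈ FC A → θ.inf φ ∈ FC A) ∧
  (∀ θ φ, θ ∈ FC A → φ ∈ FC A → θ.sup φ ∈ FC A) ∧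
  (∀ θ φ ψ, θ ∈ FC A → φ ∈ FC A → ψ ∈ FC A →
    θ.inf (φ.sup ψ) = (θ.inf φ).sup (θ.inf ψ))

/-- The variety axiomatized by `E` has Boolean factor congruences. -/
def BFC {S : Sig} (E : Set (Tm S ℕ × Tm S ℕ)) : Prop :=
  ∀ A : Alg S, InV E A → HasBFC A

/-- Direct product of two algebras. -/
def Alg.prod {S : Sig} (A B : Alg S) : Alg S where
  carrier := A.carrier × B.carrier
  interp f xs := (A.interp f (fun i => (xs i).1), B.interp f (fun i => (xs i).2))

/-- Direct product of a family of algebras. -/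
def Alg.pi {S : Sig} {ι : Type} (A : ι → Alg S) : Alg S where
  carrier := ∀ i, (A i).carrier
  interp f xs i := (A i).interp f (fun j => (xs j) i)

/-- First-order formulas over a purely functional signature, with `k` free
variables (de Bruijn style: `all` binds a new last variable).  Negation,
conjunction, disjunction and existential quantification are definable from
`falsum`, `imp` and `all`, so this captures full first-order logic. -/
inductive Fml (S : Sig) : ℕ → Type
  | eq {k : ℕ} : Tm S (Fin k) → Tm S (Fin k) → Fml S k
  | falsum {k : ℕ} : Fml S k
  | imp {k : ℕ} : Fml S k → Fml S k → Fml S k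
  | all {k : ℕ} : Fml S (k + 1) → Fml S k

/-- Tarskian satisfaction of a first-order formula in an algebra. -/
def Fml.realize {S : Sig} (A : Alg S) : ∀ {k : ℕ}, Fml S k → (Fin k → A.carrier) → Prop
  | _, .eq t u, v => Tm.eval A v t = Tm.eval A v u
  | _, .falsum, _ => False
  | _, .imp f g, v => Fml.realize A f v → Fml.realize A g v
  | _, .all f, v => ∀ a : A.carrier, Fml.realize A f (Fin.snoc v a)

/-- A formula is preserved by direct products. -/
def PreservedByProducts {S : Sig} {l : ℕ} (φ : Fml S l) : Prop :=
  ∀ (ι : Type) (A : ι → Alg S) (v : Fin l → (Alg.pi A).carrier),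
    (∀ i, φ.realize (A i) (fun m => v m i)) → φ.realize (Alg.pi A) v

/-- A formula is preserved by direct factors. -/
def PreservedByFactors {S : Sig} {l : ℕ} (φ : Fml S l) : Prop :=
  ∀ (A B : Alg S) (v : Fin l → (A.prod B).carrier),
    φ.realize (A.prod B) v →
      φ.realize A (fun m => (v m).1) ∧ φ.realize B (fun m => (v m).2)

/-! ### Tuples `(x, y, z, w, x₁, y₁, …, xₙ, yₙ)` and the maps σ, σ*, ρ, ρ* -/

/-- The tuple `(x, y, z, w, x₁, y₁, x₂, y₂, …)` as an assignment of variables: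
variable `0 ↦ x`, `1 ↦ y`, `2 ↦ z`, `3 ↦ w`, `4 + 2m ↦ xs m`, `5 + 2m ↦ ys m`. -/
def tup {α : Type} (x y z w : α) (xs ys : ℕ → α) : ℕ → α
  | 0 => x
  | 1 => y
  | 2 => z
  | 3 => w
  | m + 4 => if m % 2 = 0 then xs (m / 2) else ys (m / 2)

/-- Extend a tuple `Fin n → α` to all of `ℕ` by a default value. -/
def extN {α : Type} {n : ℕ} (dflt : α) (f : Fin n → α) : ℕ → α :=
  fun m => if h : m < n then f ⟨m, h⟩ else dflt

/-- Evaluate a term of arity `m` at (the first `m` entries of) a tuple. -/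
def evalAt {S : Sig} (A : Alg S) {m : ℕ} (u : Tm S (Fin m)) (X : ℕ → A.carrier) :
    A.carrier :=
  Tm.eval A (fun i => X i.val) u

/-- The set of pairs of corresponding components of two tuples of length `len`;
`Cg(X⃗, Y⃗)` is `cg (tupPairs X Y len)`. -/
def tupPairs {α : Type} (X Y : ℕ → α) (len : ℕ) : Set (α × α) :=
  {p | ∃ m, m < len ∧ p = (X m, Y m)}

/-- The recursively computed `x`-row: `row j = (u j)(h1,h2,h3,h4,row 0,ys 0,…,
row (j-1), ys (j-1))`.  `recRowX A u h1 h2 h3 h4 ys j m` is the value of the row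
at index `m`, computed after `j` recursion steps (only the values at `m < j`
are meaningful; later steps never change them). -/
def recRowX {S : Sig} (A : Alg S) {n : ℕ} (u : ∀ j : Fin n, Tm S (Fin (4 + 2 * j.val)))
    (h1 h2 h3 h4 : A.carrier) (ys : ℕ → A.carrier) : ℕ → ℕ → A.carrier
  | 0, _ => h1
  | j + 1, m =>
    if m = j then
      if h : j < n then
        Tm.eval A (fun i => tup h1 h2 h3 h4 (recRowX A u h1 h2 h3 h4 ys j) ys i.val)
          (u ⟨j, h⟩)
      else h1
    else recRowX A u h1 h2 h3 h4 ys j m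

/-- The recursively computed `y`-row (the `x`-row being fixed). -/
def recRowY {S : Sig} (A : Alg S) {n : ℕ} (u : ∀ j : Fin n, Tm S (Fin (4 + 2 * j.val)))
    (h1 h2 h3 h4 : A.carrier) (xs : ℕ → A.carrier) : ℕ → ℕ → A.carrier
  | 0, _ => h1
  | j + 1, m =>
    if m = j then
      if h : j < n then
        Tm.eval A (fun i => tup h1 h2 h3 h4 xs (recRowY A u h1 h2 h3 h4 xs j) i.val)
          (u ⟨j, h⟩)
      else h1
    else recRowY A u h1 h2 h3 h4 xs j m

/-- The tuple `σ(X⃗)`: heads `(x, y, x, y)`, `y`-row unchanged, `x`-row computed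
recursively by the terms `s`. -/
def sigmaT {S : Sig} (A : Alg S) {n : ℕ} (s : ∀ j : Fin n, Tm S (Fin (4 + 2 * j.val)))
    (x y z w : A.carrier) (xs ys : ℕ → A.carrier) : ℕ → A.carrier :=
  tup x y x y (recRowX A s x y x y ys n) ys

/-- The tuple `σ*(X⃗)`: heads `(x, x, z, w)`, `y`-row unchanged, `x`-row computed
recursively by the terms `t`. -/
def sigmaStarT {S : Sig} (A : Alg S) {n : ℕ} (t : ∀ j : Fin n, Tm S (Fin (4 + 2 * j.val)))
    (x y z w : A.carrier) (xs ys : ℕ → A.carrier) : ℕ → A.carrier :=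
  tup x x z w (recRowX A t x x z w ys n) ys

/-- The tuple `ρ(X⃗)`: heads `(x, y, z, z)`, `x`-row unchanged, `y`-row computed
recursively by the terms `s`. -/
def rhoT {S : Sig} (A : Alg S) {n : ℕ} (s : ∀ j : Fin n, Tm S (Fin (4 + 2 * j.val)))
    (x y z w : A.carrier) (xs ys : ℕ → A.carrier) : ℕ → A.carrier :=
  tup x y z z xs (recRowY A s x y z z xs n)

/-- The tuple `ρ*(X⃗)`: heads `(x, y, z, w)`, `x`-row unchanged, `y`-row computed
recursively by the terms `t`. -/
def rhoStarT {S : Sig} (A : Alg S) {n : ℕ} (t : ∀ j : Fin n, Tm S (Fin (4 + 2 * j.val)))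
    (x y z w : A.carrier) (xs ys : ℕ → A.carrier) : ℕ → A.carrier :=
  tup x y z w xs (recRowY A t x y z w xs n)

/-- The pair of relations `(δ_m, ε_m)` determined by congruences θ, θ*, φ, φ*:
`δ₀ = ε₀ = Δ`, `δ_{m+1} = (θ ∘ ε_m) ∩ (θ* ∘ ε_m)`,
`ε_{m+1} = (φ ∘ δ_m) ∩ (φ* ∘ δ_m)`. -/
def deltaEps {S : Sig} {A : Alg S} (θ θs φ φs : Con A) :
    ℕ → (A.carrier → A.carrier → Prop) × (A.carrier → A.carrier → Prop)
  | 0 => (Eq, Eq)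
  | m + 1 =>
    let p := deltaEps θ θs φ φs m
    (fun a b => relComp θ.rel p.2 a b ∧ relComp θs.rel p.2 a b,
     fun a b => relComp φ.rel p.1 a b ∧ relComp φs.rel p.1 a b)

/-- Willard's congruence-theoretic condition (Corollary on Willard terms): for
every algebra in the variety, all congruences θ, θ*, φ, φ* and every tuple, if
`Cg(X⃗,σ(X⃗)) ⊆ θ`, `Cg(X⃗,σ*(X⃗)) ⊆ θ*`, `Cg(X⃗,ρ(X⃗)) ⊆ φ` and
`Cg(X⃗,ρ*(X⃗)) ⊆ φ*` then `(x, y) ∈ φ ∘ δ_N`. -/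
def MalcevRelCondition {S : Sig} (E : Set (Tm S ℕ × Tm S ℕ)) (N n : ℕ)
    (s t : ∀ j : Fin n, Tm S (Fin (4 + 2 * j.val))) : Prop :=
  ∀ A : Alg S, InV E A → ∀ θ θs φ φs : Con A,
    ∀ x y z w : A.carrier, ∀ xs ys : Fin n → A.carrier,
      conLE (cg (tupPairs (tup x y z w (extN x xs) (extN x ys))
        (sigmaT A s x y z w (extN x xs) (extN x ys)) (4 + 2 * n))) θ →
      conLE (cg (tupPairs (tup x y z w (extN x xs) (extN x ys))
        (sigmaStarT A t x y z w (extN x xs) (extN x ys)) (4 + 2 * n))) θs →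
      conLE (cg (tupPairs (tup x y z w (extN x xs) (extN x ys))
        (rhoT A s x y z w (extN x xs) (extN x ys)) (4 + 2 * n))) φ →
      conLE (cg (tupPairs (tup x y z w (extN x xs) (extN x ys))
        (rhoStarT A t x y z w (extN x xs) (extN x ys)) (4 + 2 * n))) φs →
      relComp φ.rel (deltaEps θ θs φ φs N).1 x y

/-! ### The Mal'cev condition for BFC: words and the terms `L_α`, `R_α` -/

/-- A word over the alphabet `{1, …, N}`. -/
def IsWord (N : ℕ) (α : List ℕ) : Prop := ∀ j ∈ α, 1 ≤ j ∧ j ≤ N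

/-- The chain of identities associated with a word `α` (with `N = 2k`) and a
pair of tuples `Y` and `Ys` (which will be `ρ(X⃗), ρ*(X⃗)` or `σ(X⃗), σ*(X⃗)`). -/
def ChainCond {S : Sig} (A : Alg S) {n : ℕ} (k : ℕ)
    (L R : List ℕ → Tm S (Fin (4 + 2 * n))) (α : List ℕ)
    (Y Ys : ℕ → A.carrier) : Prop :=
  evalAt A (L α) Y = evalAt A (L (α ++ [1])) Y ∧
  (∀ j, 1 ≤ j → j ≤ k - 1 →
    evalAt A (R (α ++ [j])) Y = evalAt A (L (α ++ [j + 1])) Y) ∧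
  evalAt A (R (α ++ [k])) Y = evalAt A (R α) Y ∧
  evalAt A (L α) Ys = evalAt A (L (α ++ [k + 1])) Ys ∧
  (∀ j, k + 1 ≤ j → j ≤ 2 * k - 1 →
    evalAt A (R (α ++ [j])) Ys = evalAt A (L (α ++ [j + 1])) Ys) ∧
  evalAt A (R (α ++ [2 * k])) Ys = evalAt A (R α) Ys

/-- `(N = 2k, n, s, t, L, R)` witness the BFC Mal'cev condition for the variety
axiomatized by `E`. -/
def MalcevWitness {S : Sig} (E : Set (Tm S ℕ × Tm S ℕ)) (k n : ℕ)
    (s t : ∀ j : Fin n, Tm S (Fin (4 + 2 * j.val)))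
    (L R : List ℕ → Tm S (Fin (4 + 2 * n))) : Prop :=
  0 < k ∧ 0 < n ∧
  ∀ A : Alg S, InV E A → ∀ (x y z w : A.carrier) (xs ys : ℕ → A.carrier),
    (∀ α : List ℕ, IsWord (2 * k) α → α.length = 2 * k →
      evalAt A (L α) (rhoT A s x y z w xs ys) =
        evalAt A (R α) (rhoT A s x y z w xs ys) ∧
      evalAt A (L α) (rhoStarT A t x y z w xs ys) =
        evalAt A (R α) (rhoStarT A t x y z w xs ys)) ∧
    (x = evalAt A (L []) (tup x y z w xs ys)) ∧
    (y = evalAt A (R []) (tup x y z w xs ys)) ∧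
    (evalAt A (L []) (rhoT A s x y z w xs ys) =
      evalAt A (L [1]) (rhoT A s x y z w xs ys)) ∧
    (∀ j, 1 ≤ j → j ≤ 2 * k - 1 →
      evalAt A (R [j]) (rhoT A s x y z w xs ys) =
        evalAt A (L [j + 1]) (rhoT A s x y z w xs ys)) ∧
    (evalAt A (R [2 * k]) (rhoT A s x y z w xs ys) =
      evalAt A (R []) (rhoT A s x y z w xs ys)) ∧
    (∀ α : List ℕ, IsWord (2 * k) α → α ≠ [] → α.length < 2 * k →
      α.length % 2 = 0 →
      ChainCond A k L R α (rhoT A s x y z w xs ys) (rhoStarT A t x y z w xs ys)) ∧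
    (∀ α : List ℕ, IsWord (2 * k) α → α ≠ [] → α.length < 2 * k →
      α.length % 2 = 1 →
      ChainCond A k L R α (sigmaT A s x y z w xs ys) (sigmaStarT A t x y z w xs ys))

/-! ### The formulas Ψ_m, Φ₁ and Φ₂ -/

/-- Alternating quantifier prefix `∃ u₁ ∀ v₁ … ∃ uₘ ∀ vₘ, P [u₁, v₁, …, uₘ, vₘ]`
(the accumulator collects the quantified elements in order). -/
def altQ {α : Type} (P : List α → Prop) : ℕ → List α → Prop
  | 0, acc => P acc
  | m + 1, acc => ∃ u : α, ∀ v : α, altQ P m (acc ++ [u, v])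

/-- The (realization of the) formula `Ψ_m`: for every word `α` of length `m`,
if `L_{αγ} = R_{αγ}` for all nonempty `γ` with `|αγ| ≤ N`, then `L_α = R_α`. -/
def Psi {S : Sig} (A : Alg S) {n : ℕ} (N : ℕ)
    (L R : List ℕ → Tm S (Fin (4 + 2 * n))) (m : ℕ) (X : ℕ → A.carrier) : Prop :=
  ∀ α : List ℕ, IsWord N α → α.length = m →
    ((∀ γ : List ℕ, IsWord N γ → γ ≠ [] → (α ++ γ).length ≤ N →
        evalAt A (L (α ++ γ)) X = evalAt A (R (α ++ γ)) X) →
      evalAt A (L α) X = evalAt A (R α) X)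

/-- Realization of `Φ₁(x,y,z,w) = ∃y₁∀x₁ ⋯ ∃yₙ∀xₙ ⋀_{m=1}^{k} Ψ_{2m}`. -/
def Phi1 {S : Sig} (A : Alg S) (k n : ℕ)
    (L R : List ℕ → Tm S (Fin (4 + 2 * n))) (x y z w : A.carrier) : Prop :=
  altQ (fun acc =>
    ∀ m, 1 ≤ m → m ≤ k →
      Psi A (2 * k) L R (2 * m)
        (tup x y z w (fun i => acc.getD (2 * i + 1) x) (fun i => acc.getD (2 * i) x)))
    n []

/-- Realization of `Φ₂(x,y,z,w) = ∃x₁∀y₁ ⋯ ∃xₙ∀yₙ ⋀_{m=1}^{k} Ψ_{2m-1}`. -/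
def Phi2 {S : Sig} (A : Alg S) (k n : ℕ)
    (L R : List ℕ → Tm S (Fin (4 + 2 * n))) (x y z w : A.carrier) : Prop :=
  altQ (fun acc =>
    ∀ m, 1 ≤ m → m ≤ k →
      Psi A (2 * k) L R (2 * m - 1)
        (tup x y z w (fun i => acc.getD (2 * i) x) (fun i => acc.getD (2 * i + 1) x)))
    n []

/-- `Γ^A(a,b,c,d)`: every factor congruence containing `(c,d)` contains `(a,b)`. -/
def Gamma {S : Sig} (A : Alg S) (a b c d : A.carrier) : Prop :=
  ∀ θ ∈ FC A, θ.rel c d → θ.rel a b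



/-! ### Auxiliary lemmas for the proof -/

private lemma evalAt_congr {S : Sig} (A : Alg S) {m : ℕ} (u : Tm S (Fin m))
    {X Y : ℕ → A.carrier} (h : ∀ i < m, X i = Y i) :
    evalAt A u X = evalAt A u Y :=
  congrArg (fun v => Tm.eval A v u) (funext fun i => h i.val i.isLt)

private lemma tup_congr {α : Type} (x y z w : α) {xs xs' ys ys' : ℕ → α} {n' : ℕ}
    (hxs : ∀ i < n', xs i = xs' i) (hys : ∀ i < n', ys i = ys' i) :
    ∀ m < 4 + 2 * n', tup x y z w xs ys m = tup x y z w xs' ys' m := by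
  intro m hm
  match m with
  | 0 => rfl
  | 1 => rfl
  | 2 => rfl
  | 3 => rfl
  | (m+4) =>
    simp only [tup]
    split_ifs with h
    · exact hxs _ (by omega)
    · exact hys _ (by omega)

private lemma recRowX_stable {S : Sig} (A : Alg S) {n : ℕ}
    (u : ∀ j : Fin n, Tm S (Fin (4 + 2 * j.val)))
    (h1 h2 h3 h4 : A.carrier) (ys : ℕ → A.carrier) :
    ∀ j m, m < j → recRowX A u h1 h2 h3 h4 ys j m
      = recRowX A u h1 h2 h3 h4 ys (m+1) m := by
  intro j
  induction j with
  | zero => intro m hm; omega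
  | succ j ih =>
    intro m hm
    rcases Nat.lt_or_ge m j with h | h
    · have : recRowX A u h1 h2 h3 h4 ys (j+1) m = recRowX A u h1 h2 h3 h4 ys j m := by
        simp only [recRowX, if_neg (Nat.ne_of_lt h)]
      rw [this, ih m h]
    · have : m = j := by omega
      subst this; rfl

private lemma recRowX_ys_congr {S : Sig} (A : Alg S) {n : ℕ}
    (u : ∀ j : Fin n, Tm S (Fin (4 + 2 * j.val)))
    (h1 h2 h3 h4 : A.carrier) (ys ys' : ℕ → A.carrier) :
    ∀ j, (∀ i, i + 1 < j → ys i = ys' i) →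
      ∀ m, recRowX A u h1 h2 h3 h4 ys j m = recRowX A u h1 h2 h3 h4 ys' j m := by
  intro j
  induction j with
  | zero => intro _ m; rfl
  | succ j ih =>
    intro h m
    have h' : ∀ i, i + 1 < j → ys i = ys' i := fun i hi => h i (Nat.lt_succ_of_lt hi)
    have h'' : ∀ i < j, ys i = ys' i := fun i hi => h i (by omega)
    simp only [recRowX]
    by_cases hm : m = j
    · simp only [if_pos hm]
      by_cases hj : j < n
      · simp only [dif_pos hj]
        exact congrArg (fun v => Tm.eval A v (u ⟨j, hj⟩))
          (funext fun i => tup_congr h1 h2 h3 h4 (fun i' _ => ih h' i') h'' i.val i.isLt)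
      · simp only [dif_neg hj]
    · simp only [if_neg hm]
      exact ih h' m

/-- **Lemma.**  If `(N = 2k, n, sᵢ, tᵢ, L_α, R_α)` witness the BFC Mal'cev
condition for the variety, then `V ⊨ Φ₂(x,y,x,y)`. -/
theorem statement11 {S : Sig} (E : Set (Tm S ℕ × Tm S ℕ)) (k n : ℕ)
    (s t : ∀ j : Fin n, Tm S (Fin (4 + 2 * j.val)))
    (L R : List ℕ → Tm S (Fin (4 + 2 * n)))
    (hW : MalcevWitness E k n s t L R) :
    ∀ A : Alg S, InV E A → ∀ a b : A.carrier, Phi2 A k n L R a b a b := by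
  obtain ⟨hk, hn, hmain⟩ := hW
  intro A hA a b
  unfold Phi2
  suffices H : ∀ r acc, acc.length + 2*r = 2*n →
      (∀ i, 2*i+1 < acc.length →
        acc.getD (2*i) a
          = recRowX A s a b a b (fun i' => acc.getD (2*i'+1) a) (i+1) i) →
      altQ (fun acc => ∀ m, 1 ≤ m → m ≤ k →
        Psi A (2*k) L R (2*m-1)
          (tup a b a b (fun i => acc.getD (2*i) a) (fun i => acc.getD (2*i+1) a))) r acc by
    exact H n [] (by simp) (by intro i hi; simp at hi)
  intro r
  induction r with
  | zero =>
    intro acc hlen hinv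
    show ∀ m, 1 ≤ m → m ≤ k → _
    intro m hm1 hm2
    intro α hα hlenα hγ
    have hlenacc : acc.length = 2 * n := by omega
    -- the assignments
    set xs : ℕ → A.carrier := fun i => acc.getD (2*i) a with hxsdef
    set ys : ℕ → A.carrier := fun i => acc.getD (2*i+1) a with hysdef
    -- σ(X⃗) agrees with X⃗ on the relevant indices
    have hagree : ∀ i < 4 + 2 * n,
        sigmaT A s a b a b xs ys i = tup a b a b xs ys i := by
      have hxr : ∀ i < n, recRowX A s a b a b ys n i = xs i := by
        intro i hi
        rw [recRowX_stable A s a b a b ys n i hi]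
        exact (hinv i (by omega)).symm
      exact tup_congr a b a b hxr (fun _ _ => rfl)
    have Ev : ∀ u : Tm S (Fin (4 + 2 * n)),
        evalAt A u (sigmaT A s a b a b xs ys) = evalAt A u (tup a b a b xs ys) :=
      fun u => evalAt_congr A u hagree
    -- the odd chain condition
    obtain ⟨-, -, -, -, -, -, -, hodd⟩ := hmain A hA a b a b xs ys
    have hαodd : α.length % 2 = 1 := by omega
    have hαne : α ≠ [] := by
      intro h; rw [h] at hlenα; simp at hlenα; omega
    have hαlt : α.length < 2 * k := by omega
    obtain ⟨c1, c2, c3, -⟩ := hodd α hα hαne hαlt hαodd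
    -- chaining
    have hγ' : ∀ j, 1 ≤ j → j ≤ k →
        evalAt A (L (α ++ [j])) (tup a b a b xs ys)
          = evalAt A (R (α ++ [j])) (tup a b a b xs ys) := by
      intro j hj1 hj2
      refine hγ [j] ?_ (by simp) (by simp; omega)
      intro i hi
      simp only [List.mem_singleton] at hi
      omega
    have key : ∀ j, 1 ≤ j → j ≤ k →
        evalAt A (L α) (tup a b a b xs ys)
          = evalAt A (R (α ++ [j])) (tup a b a b xs ys) := by
      intro j
      induction j with
      | zero => omega
      | succ j ih =>
        intro _ hjk
        by_cases hj0 : j = 0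
        · subst hj0
          have e1 : evalAt A (L α) (tup a b a b xs ys)
              = evalAt A (L (α ++ [1])) (tup a b a b xs ys) := by
            rw [← Ev (L α), ← Ev (L (α ++ [1]))]; exact c1
          rw [e1]; exact hγ' 1 le_rfl hjk
        · have h1 : 1 ≤ j := by omega
          have e2 : evalAt A (R (α ++ [j])) (tup a b a b xs ys)
              = evalAt A (L (α ++ [j+1])) (tup a b a b xs ys) := by
            rw [← Ev (R (α ++ [j])), ← Ev (L (α ++ [j+1]))]
            exact c2 j h1 (by omega)
          rw [ih h1 (by omega), e2]
          exact hγ' (j+1) (by omega) hjk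
    have e3 : evalAt A (R (α ++ [k])) (tup a b a b xs ys)
        = evalAt A (R α) (tup a b a b xs ys) := by
      rw [← Ev (R (α ++ [k])), ← Ev (R α)]; exact c3
    exact (key k hk le_rfl).trans e3
  | succ r ih =>
    intro acc hlen hinv
    set u : A.carrier := recRowX A s a b a b (fun i' => acc.getD (2*i'+1) a)
      (acc.length/2 + 1) (acc.length/2) with hu
    refine ⟨u, fun v => ih (acc ++ [u, v]) ?_ ?_⟩
    · simp only [List.length_append, List.length_cons, List.length_nil]; omega
    · intro i hi
      have hacclen : (acc ++ [u, v]).length = acc.length + 2 := by simp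
      rw [hacclen] at hi
      have heven : acc.length % 2 = 0 := by omega
      have hys' : ∀ i', 2*i'+1 < acc.length →
          (acc ++ [u, v]).getD (2*i'+1) a = acc.getD (2*i'+1) a :=
        fun i' hi' => List.getD_append _ _ _ _ hi'
      rcases Nat.lt_or_ge (2*i+1) acc.length with hlt | hge
      · rw [List.getD_append _ _ _ _ (by omega)]
        rw [hinv i hlt]
        exact recRowX_ys_congr A s a b a b _ _ (i+1)
          (fun i' hi' => (hys' i' (by omega)).symm) i
      · have hieq : 2*i = acc.length := by omega
        have : (acc ++ [u, v]).getD (2*i) a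
            = recRowX A s a b a b (fun i' => acc.getD (2*i'+1) a)
                (acc.length/2 + 1) (acc.length/2) := by
          rw [hieq, List.getD_append_right _ _ _ _ (le_refl _), Nat.sub_self]
          rfl
        rw [this]
        have hidiv : acc.length / 2 = i := by omega
        rw [hidiv]
        exact recRowX_ys_congr A s a b a b _ _ (i+1)
          (fun i' hi' => (hys' i' (by omega)).symm) i


end UA
end

section
/- Let V be a variety and π(x,y,z,w) a first-order formula in the language of V which is preserved by direct factors and satisfies: for all A ∈ V and x,y,z ∈ A, A ⊨ π(x,y,z,z) implies x = y. Then for every A ∈ V, all a,b,c,d ∈ A with A ⊨ π(a,b,c,d), and every factor congruence θ ∈ FC(A): (c,d) ∈ θ implies (a,b) ∈ θ. -/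
set_option linter.unusedVariables false

namespace UA

/-- The setoid underlying a congruence. -/
def Con.toSetoid {S : Sig} {A : Alg S} (θ : Con A) : Setoid A.carrier :=
  ⟨θ.rel, ⟨θ.refl, fun h => θ.symm _ _ h, fun h h' => θ.trans _ _ _ h h'⟩⟩

/-- Quotient algebra by a congruence. -/
noncomputable def quotAlg {S : Sig} {A : Alg S} (θ : Con A) : Alg S where
  carrier := Quotient θ.toSetoid
  interp f xs := Quotient.mk θ.toSetoid (A.interp f (fun i => (xs i).out))

lemma quot_interp {S : Sig} {A : Alg S} (θ : Con A) (f : S.ops)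
    (g : Fin (S.ar f) → A.carrier) :
    (quotAlg θ).interp f (fun i => Quotient.mk θ.toSetoid (g i)) =
      Quotient.mk θ.toSetoid (A.interp f g) := by
  apply Quotient.sound
  refine θ.compat f _ _ (fun i => ?_)
  exact Quotient.exact (Quotient.out_eq (Quotient.mk θ.toSetoid (g i)))

lemma quot_eval {S : Sig} {A : Alg S} (θ : Con A) {V : Type}
    (v : V → A.carrier) (t : Tm S V) :
    Tm.eval (quotAlg θ) (fun i => Quotient.mk θ.toSetoid (v i)) t =
      Quotient.mk θ.toSetoid (Tm.eval A v t) := by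
  induction t with
  | var i => rfl
  | app f ts ih =>
      show (quotAlg θ).interp f _ = _
      have : (fun i => Tm.eval (quotAlg θ) (fun i => Quotient.mk θ.toSetoid (v i)) (ts i))
          = fun i => Quotient.mk θ.toSetoid (Tm.eval A v (ts i)) := funext ih
      rw [this, quot_interp]
      rfl

lemma quot_inV {S : Sig} {E : Set (Tm S ℕ × Tm S ℕ)} {A : Alg S}
    (hA : InV E A) (θ : Con A) : InV E (quotAlg θ) := by
  intro e he v
  have hv : v = fun n => Quotient.mk θ.toSetoid ((v n).out) :=
    funext fun n => (Quotient.out_eq _).symm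
  rw [hv, quot_eval, quot_eval, hA e he]

lemma eval_hom {S : Sig} {A B : Alg S} (h : A.carrier → B.carrier)
    (hh : ∀ f g, h (A.interp f g) = B.interp f (fun i => h (g i)))
    {V : Type} (v : V → A.carrier) (t : Tm S V) :
    Tm.eval B (fun i => h (v i)) t = h (Tm.eval A v t) := by
  induction t with
  | var i => rfl
  | app f ts ih =>
      show B.interp f (fun i => Tm.eval B (fun j => h (v j)) (ts i))
          = h (A.interp f (fun i => Tm.eval A v (ts i)))
      rw [hh]
      exact congrArg (B.interp f) (funext fun i => (ih i))

lemma realize_iso {S : Sig} {A B : Alg S} (h : A.carrier → B.carrier)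
    (hh : ∀ f g, h (A.interp f g) = B.interp f (fun i => h (g i)))
    (hinj : Function.Injective h) (hsurj : Function.Surjective h) :
    ∀ {k : ℕ} (φ : Fml S k) (v : Fin k → A.carrier),
      φ.realize A v ↔ φ.realize B (fun i => h (v i)) := by
  intro k φ
  induction φ with
  | eq t u =>
      intro v
      show Tm.eval A v t = Tm.eval A v u ↔
        Tm.eval B (fun i => h (v i)) t = Tm.eval B (fun i => h (v i)) u
      rw [eval_hom h hh, eval_hom h hh]
      exact ⟨fun e => congrArg h e, fun e => hinj e⟩
  | falsum => intro v; exact Iff.rfl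
  | imp f g ihf ihg =>
      intro v
      exact imp_congr (ihf v) (ihg v)
  | all f ih =>
      intro v
      have heq : ∀ a : A.carrier,
          (fun i => h ((Fin.snoc v a : Fin _ → A.carrier) i))
            = Fin.snoc (fun i => h (v i)) (h a) :=
        fun a => funext fun i => congrFun (Fin.comp_snoc h v a) i
      show (∀ a, Fml.realize A f (Fin.snoc v a)) ↔
        (∀ b, Fml.realize B f (Fin.snoc (fun i => h (v i)) b))
      constructor
      · intro H b
        obtain ⟨a, rfl⟩ := hsurj b
        have := (ih (Fin.snoc v a)).mp (H a)
        rwa [heq a] at this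
      · intro H a
        apply (ih (Fin.snoc v a)).mpr
        rw [heq a]
        exact H (h a)

/-- If `π(x,y,z,w)` is preserved by direct factors and satisfies
`V ⊨ π(x,y,z,z) → x = y`, then whenever `A ⊨ π(a,b,c,d)` and `θ` is a factor
congruence of `A` with `(c,d) ∈ θ`, also `(a,b) ∈ θ`. -/
theorem statement14 {S : Sig} (E : Set (Tm S ℕ × Tm S ℕ)) (π : Fml S 4)
    (hfac : PreservedByFactors π)
    (hdiag : ∀ A : Alg S, InV E A → ∀ x y z : A.carrier,
      π.realize A ![x, y, z, z] → x = y)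
    (A : Alg S) (hA : InV E A) (a b c d : A.carrier)
    (h : π.realize A ![a, b, c, d])
    (θ : Con A) (hθ : θ ∈ FC A) (hcd : θ.rel c d) : θ.rel a b := by
  obtain ⟨θs, hmeet, hjoin⟩ := hθ
  set B := quotAlg θ with hB
  set C := quotAlg θs with hC
  set hmap : A.carrier → (B.prod C).carrier :=
    fun x => (Quotient.mk θ.toSetoid x, Quotient.mk θs.toSetoid x) with hhmap
  have hhom : ∀ f g, hmap (A.interp f g) = (B.prod C).interp f (fun i => hmap (g i)) := by
    intro f g
    show (_, _) = ((B.prod C).interp f _)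
    have h1 := quot_interp θ f g
    have h2 := quot_interp θs f g
    exact Prod.ext h1.symm h2.symm
  have hinj : Function.Injective hmap := by
    intro x y hxy
    have h1 : θ.rel x y := Quotient.exact (congrArg Prod.fst hxy)
    have h2 : θs.rel x y := Quotient.exact (congrArg Prod.snd hxy)
    exact hmeet x y h1 h2
  have hsurj : Function.Surjective hmap := by
    rintro ⟨p, q⟩
    obtain ⟨u, rfl⟩ := Quotient.exists_rep p
    obtain ⟨v, rfl⟩ := Quotient.exists_rep q
    obtain ⟨e, he1, he2⟩ := hjoin u v
    refine ⟨e, Prod.ext ?_ ?_⟩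
    · exact Quotient.sound (θ.symm _ _ he1)
    · exact Quotient.sound he2
  have hprod : π.realize (B.prod C) (fun i => hmap (![a, b, c, d] i)) :=
    (realize_iso hmap hhom hinj hsurj π ![a, b, c, d]).mp h
  have hBreal := (hfac B C _ hprod).1
  have heq : (fun m => ((fun i => hmap (![a, b, c, d] i)) m).1)
      = ![Quotient.mk θ.toSetoid a, Quotient.mk θ.toSetoid b,
          Quotient.mk θ.toSetoid c, Quotient.mk θ.toSetoid c] := by
    funext i
    fin_cases i
    · rfl
    · rfl
    · rfl
    · exact Quotient.sound (θ.symm _ _ hcd)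
  rw [heq] at hBreal
  have := hdiag B (quot_inV hA θ) _ _ _ hBreal
  exact Quotient.exact this

end UA
end

section
/- Let V be a variety with Boolean factor congruences, let A, B ∈ V, and let a,b,c,d ∈ A and a',b',c',d' ∈ B. Then Γ^{A×B}((a,a'),(b,b'),(c,c'),(d,d')) holds if and only if both Γ^A(a,b,c,d) and Γ^B(a',b',c',d') hold. -/
set_option linter.unusedVariables false

namespace UA

/-! ### Auxiliary lemmas for statement16 -/

theorem Con.ext' {S : Sig} {A : Alg S} {θ φ : Con A} (h : θ.rel = φ.rel) : θ = φ := by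
  cases θ; cases φ; cases h; rfl

theorem conLE_antisymm {S : Sig} {A : Alg S} {θ φ : Con A}
    (h1 : conLE θ φ) (h2 : conLE φ θ) : θ = φ :=
  Con.ext' (funext fun a => funext fun b => propext ⟨h1 a b, h2 a b⟩)

theorem conLE_sup_left {S : Sig} {A : Alg S} {θ φ : Con A} : conLE θ (θ.sup φ) :=
  fun a b h ψ hs => hs (a, b) (Or.inl h)

theorem conLE_sup_right {S : Sig} {A : Alg S} {θ φ : Con A} : conLE φ (θ.sup φ) :=
  fun a b h ψ hs => hs (a, b) (Or.inr h)

theorem conSup_le {S : Sig} {A : Alg S} {θ φ ψ : Con A}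
    (h1 : conLE θ ψ) (h2 : conLE φ ψ) : conLE (θ.sup φ) ψ :=
  fun a b h => h ψ (fun p hp => hp.elim (h1 p.1 p.2) (h2 p.1 p.2))

theorem conSup_comm {S : Sig} {A : Alg S} (θ φ : Con A) : θ.sup φ = φ.sup θ :=
  conLE_antisymm (conSup_le conLE_sup_right conLE_sup_left)
    (conSup_le conLE_sup_right conLE_sup_left)

theorem conInf_comm {S : Sig} {A : Alg S} (θ φ : Con A) : θ.inf φ = φ.inf θ :=
  conLE_antisymm (fun _ _ h => ⟨h.2, h.1⟩) (fun _ _ h => ⟨h.2, h.1⟩)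

theorem compFC_symm {S : Sig} {A : Alg S} {θ θs : Con A}
    (h : AreCompFC θ θs) : AreCompFC θs θ := by
  refine ⟨fun a b h1 h2 => h.1 a b h2 h1, fun a b => ?_⟩
  obtain ⟨c, hc1, hc2⟩ := h.2 b a
  exact ⟨c, θs.symm _ _ hc2, θ.symm _ _ hc1⟩

/-- Dual distributivity, derivable from `HasBFC`. -/
theorem dualDistr {S : Sig} {A : Alg S} (h : HasBFC A) {x y z : Con A}
    (hx : x ∈ FC A) (hy : y ∈ FC A) (hz : z ∈ FC A) :
    (x.sup z).inf (y.sup z) = (x.inf y).sup z := by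
  obtain ⟨hinf, hsup, hD⟩ := h
  have e1 : (x.sup z).inf (y.sup z) = ((x.sup z).inf y).sup ((x.sup z).inf z) :=
    hD _ _ _ (hsup _ _ hx hz) hy hz
  have e2 : (x.sup z).inf y = (y.inf x).sup (y.inf z) := by
    rw [conInf_comm]; exact hD y x z hy hx hz
  rw [e1, e2]
  apply conLE_antisymm
  · apply conSup_le
    · apply conSup_le
      · exact fun p q hpq => conLE_sup_left p q ⟨hpq.2, hpq.1⟩
      · exact fun p q hpq => conLE_sup_right p q hpq.2
    · exact fun p q hpq => conLE_sup_right p q hpq.2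
  · apply conSup_le
    · exact fun p q hpq =>
        conLE_sup_left p q (conLE_sup_left p q (⟨hpq.2, hpq.1⟩ : ((y.inf x).rel p q)))
    · exact fun p q hpq =>
        conLE_sup_right p q (⟨conLE_sup_right p q hpq, hpq⟩ : (((x.sup z).inf z).rel p q))

/-- Evaluation of a term in a product is componentwise. -/
theorem eval_prod {S : Sig} (A B : Alg S) {V : Type} (v : V → (A.prod B).carrier)
    (t : Tm S V) :
    Tm.eval (A.prod B) v t =
      (Tm.eval A (fun i => (v i).1) t, Tm.eval B (fun i => (v i).2) t) := by
  induction t with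
  | var i => rfl
  | app f ts ih =>
    show (A.prod B).interp f (fun i => Tm.eval (A.prod B) v (ts i)) = _
    rw [show (fun i => Tm.eval (A.prod B) v (ts i)) =
        (fun i => (Tm.eval A (fun j => (v j).1) (ts i),
          Tm.eval B (fun j => (v j).2) (ts i))) from funext ih]
    rfl

theorem prod_inV {S : Sig} {E : Set (Tm S ℕ × Tm S ℕ)} {A B : Alg S}
    (hA : InV E A) (hB : InV E B) : InV E (A.prod B) := by
  intro e he v
  have h1 := hA e he (fun i => (v i).1)
  have h2 := hB e he (fun i => (v i).2)
  show Tm.eval (A.prod B) v e.1 = Tm.eval (A.prod B) v e.2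
  rw [eval_prod, eval_prod, h1, h2]

/-- The kernel of the first projection's companion: pairs with equal first
coordinate. The quotient is `A`. -/
def etaA {S : Sig} (A B : Alg S) : Con (A.prod B) where
  rel p q := p.1 = q.1
  refl _ := rfl
  symm _ _ h := h.symm
  trans _ _ _ h1 h2 := h1.trans h2
  compat f ts us h :=
    show A.interp f (fun i => (ts i).1) = A.interp f (fun i => (us i).1) from
      congrArg _ (funext h)

/-- Pairs with equal second coordinate. -/
def etaB {S : Sig} (A B : Alg S) : Con (A.prod B) where
  rel p q := p.2 = q.2
  refl _ := rfl
  symm _ _ h := h.symm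
  trans _ _ _ h1 h2 := h1.trans h2
  compat f ts us h :=
    show B.interp f (fun i => (ts i).2) = B.interp f (fun i => (us i).2) from
      congrArg _ (funext h)

theorem etaA_comp_etaB {S : Sig} (A B : Alg S) : AreCompFC (etaA A B) (etaB A B) :=
  ⟨fun p q h1 h2 => Prod.ext h1 h2, fun p q => ⟨(p.1, q.2), rfl, rfl⟩⟩

theorem etaA_FC {S : Sig} (A B : Alg S) : etaA A B ∈ FC (A.prod B) :=
  ⟨etaB A B, etaA_comp_etaB A B⟩

theorem etaB_FC {S : Sig} (A B : Alg S) : etaB A B ∈ FC (A.prod B) :=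
  ⟨etaA A B, compFC_symm (etaA_comp_etaB A B)⟩

/-- Lift a congruence of `A` to the product (times `∇` on `B`). -/
def liftA {S : Sig} {A B : Alg S} (θ : Con A) : Con (A.prod B) where
  rel p q := θ.rel p.1 q.1
  refl p := θ.refl _
  symm _ _ h := θ.symm _ _ h
  trans _ _ _ h1 h2 := θ.trans _ _ _ h1 h2
  compat f ts us h := θ.compat f _ _ h

/-- Lift a congruence of `A` to the product (times `Δ` on `B`). -/
def liftA' {S : Sig} {A B : Alg S} (θ : Con A) : Con (A.prod B) where
  rel p q := θ.rel p.1 q.1 ∧ p.2 = q.2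
  refl p := ⟨θ.refl _, rfl⟩
  symm _ _ h := ⟨θ.symm _ _ h.1, h.2.symm⟩
  trans _ _ _ h1 h2 := ⟨θ.trans _ _ _ h1.1 h2.1, h1.2.trans h2.2⟩
  compat f ts us h :=
    ⟨θ.compat f _ _ fun i => (h i).1,
      show B.interp f (fun i => (ts i).2) = B.interp f (fun i => (us i).2) from
        congrArg _ (funext fun i => (h i).2)⟩

/-- Lift a congruence of `B` to the product (times `∇` on `A`). -/
def liftB {S : Sig} {A B : Alg S} (θ : Con B) : Con (A.prod B) where
  rel p q := θ.rel p.2 q.2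
  refl p := θ.refl _
  symm _ _ h := θ.symm _ _ h
  trans _ _ _ h1 h2 := θ.trans _ _ _ h1 h2
  compat f ts us h := θ.compat f _ _ h

/-- Lift a congruence of `B` to the product (times `Δ` on `A`). -/
def liftB' {S : Sig} {A B : Alg S} (θ : Con B) : Con (A.prod B) where
  rel p q := θ.rel p.2 q.2 ∧ p.1 = q.1
  refl p := ⟨θ.refl _, rfl⟩
  symm _ _ h := ⟨θ.symm _ _ h.1, h.2.symm⟩
  trans _ _ _ h1 h2 := ⟨θ.trans _ _ _ h1.1 h2.1, h1.2.trans h2.2⟩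
  compat f ts us h :=
    ⟨θ.compat f _ _ fun i => (h i).1,
      show A.interp f (fun i => (ts i).1) = A.interp f (fun i => (us i).1) from
        congrArg _ (funext fun i => (h i).2)⟩

theorem liftA_FC {S : Sig} {A B : Alg S} {θ : Con A} (h : θ ∈ FC A) :
    liftA (B := B) θ ∈ FC (A.prod B) := by
  obtain ⟨θs, hint, hcomp⟩ := h
  refine ⟨liftA' θs, fun p q h1 h2 => Prod.ext (hint _ _ h1 h2.1) h2.2, fun p q => ?_⟩
  obtain ⟨m, hm1, hm2⟩ := hcomp p.1 q.1
  exact ⟨(m, q.2), hm1, hm2, rfl⟩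

theorem liftB_FC {S : Sig} {A B : Alg S} {θ : Con B} (h : θ ∈ FC B) :
    liftB (A := A) θ ∈ FC (A.prod B) := by
  obtain ⟨θs, hint, hcomp⟩ := h
  refine ⟨liftB' θs, fun p q h1 h2 => Prod.ext h2.2 (hint _ _ h1 h2.1), fun p q => ?_⟩
  obtain ⟨m, hm1, hm2⟩ := hcomp p.2 q.2
  exact ⟨(q.1, m), hm1, hm2, rfl⟩

/-- Push a congruence of `A × B` containing `etaA` down to `A`. -/
def pushA {S : Sig} {A B : Alg S} (δ : Con (A.prod B))
    (hδ : conLE (etaA A B) δ) (b0 : B.carrier) : Con A where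
  rel x y := δ.rel (x, b0) (y, b0)
  refl _ := δ.refl _
  symm _ _ h := δ.symm _ _ h
  trans _ _ _ h1 h2 := δ.trans _ _ _ h1 h2
  compat f ts us h := by
    have h1 := δ.compat f (fun i => (ts i, b0)) (fun i => (us i, b0)) h
    have h2 : (etaA A B).rel (A.interp f ts, b0)
        ((A.prod B).interp f fun i => (ts i, b0)) := rfl
    have h3 : (etaA A B).rel ((A.prod B).interp f fun i => (us i, b0))
        (A.interp f us, b0) := rfl
    exact δ.trans _ _ _ (hδ _ _ h2) (δ.trans _ _ _ h1 (hδ _ _ h3))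

/-- Push a congruence of `A × B` containing `etaB` down to `B`. -/
def pushB {S : Sig} {A B : Alg S} (δ : Con (A.prod B))
    (hδ : conLE (etaB A B) δ) (a0 : A.carrier) : Con B where
  rel x y := δ.rel (a0, x) (a0, y)
  refl _ := δ.refl _
  symm _ _ h := δ.symm _ _ h
  trans _ _ _ h1 h2 := δ.trans _ _ _ h1 h2
  compat f ts us h := by
    have h1 := δ.compat f (fun i => (a0, ts i)) (fun i => (a0, us i)) h
    have h2 : (etaB A B).rel (a0, B.interp f ts)
        ((A.prod B).interp f fun i => (a0, ts i)) := rfl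
    have h3 : (etaB A B).rel ((A.prod B).interp f fun i => (a0, us i))
        (a0, B.interp f us) := rfl
    exact δ.trans _ _ _ (hδ _ _ h2) (δ.trans _ _ _ h1 (hδ _ _ h3))

/-- **Proposition (5).**  In a variety with BFC, `Γ` is preserved by (and
reflected from) binary direct products. -/
theorem statement16 {S : Sig} (E : Set (Tm S ℕ × Tm S ℕ)) (hBFC : BFC E)
    (A B : Alg S) (hA : InV E A) (hB : InV E B)
    (a b c d : A.carrier) (a' b' c' d' : B.carrier) :
    Gamma (Alg.prod A B) (a, a') (b, b') (c, c') (d, d') ↔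
      Gamma A a b c d ∧ Gamma B a' b' c' d' := by
  constructor
  · intro hΓ
    constructor
    · intro θ hθ hcd
      exact hΓ (liftA θ) (liftA_FC hθ) hcd
    · intro θ hθ hcd
      exact hΓ (liftB θ) (liftB_FC hθ) hcd
  · rintro ⟨hGA, hGB⟩ θ hθ hcd
    obtain ⟨θs, hcompθ⟩ := hθ
    have hθFC : θ ∈ FC (A.prod B) := ⟨θs, hcompθ⟩
    have hθsFC : θs ∈ FC (A.prod B) := ⟨θ, compFC_symm hcompθ⟩
    have hP : HasBFC (A.prod B) := hBFC (A.prod B) (prod_inV hA hB)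
    have hηA := etaA_FC A B
    have hηB := etaB_FC A B
    -- the pushed-down factor congruence on A
    have heA : conLE (etaA A B) (θ.sup (etaA A B)) := conLE_sup_right
    have heAs : conLE (etaA A B) (θs.sup (etaA A B)) := conLE_sup_right
    set θA : Con A := pushA (θ.sup (etaA A B)) heA a' with hθAdef
    have hθA_FC : θA ∈ FC A := by
      refine ⟨pushA (θs.sup (etaA A B)) heAs a', fun x y h1 h2 => ?_, fun x y => ?_⟩
      · have eq := dualDistr hP hθFC hθsFC hηA
        have h3 : ((θ.inf θs).sup (etaA A B)).rel (x, a') (y, a') := by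
          rw [← eq]; exact ⟨h1, h2⟩
        have h4 : (etaA A B).rel (x, a') (y, a') := by
          refine conSup_le (θ := θ.inf θs) (φ := etaA A B) (ψ := etaA A B)
            (fun p q hh => congrArg Prod.fst (hcompθ.1 p q hh.1 hh.2))
            (fun p q hh => hh) _ _ h3
        exact h4
      · obtain ⟨m, hm1, hm2⟩ := hcompθ.2 (x, a') (y, a')
        refine ⟨m.1, ?_, ?_⟩
        · exact (θ.sup (etaA A B)).trans _ _ _ (conLE_sup_left _ _ hm1)
            (heA _ _ (rfl : (m.1 : A.carrier) = m.1))
        · exact (θs.sup (etaA A B)).trans _ _ _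
            (heAs _ _ (rfl : (m.1 : A.carrier) = m.1)) (conLE_sup_left _ _ hm2)
    have hcdA : θA.rel c d := by
      show (θ.sup (etaA A B)).rel (c, a') (d, a')
      refine (θ.sup (etaA A B)).trans _ _ _ (heA (c, a') (c, c') rfl) ?_
      exact (θ.sup (etaA A B)).trans _ _ _ (conLE_sup_left _ _ hcd)
        (heA (d, d') (d, a') rfl)
    have hab1 : ((etaA A B).sup θ).rel (a, a') (b, b') := by
      rw [conSup_comm]
      have h5 : (θ.sup (etaA A B)).rel (a, a') (b, a') := hGA θA hθA_FC hcdA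
      exact (θ.sup (etaA A B)).trans _ _ _ h5 (heA (b, a') (b, b') rfl)
    -- the pushed-down factor congruence on B
    have heB : conLE (etaB A B) (θ.sup (etaB A B)) := conLE_sup_right
    have heBs : conLE (etaB A B) (θs.sup (etaB A B)) := conLE_sup_right
    set θB : Con B := pushB (θ.sup (etaB A B)) heB a with hθBdef
    have hθB_FC : θB ∈ FC B := by
      refine ⟨pushB (θs.sup (etaB A B)) heBs a, fun x y h1 h2 => ?_, fun x y => ?_⟩
      · have eq := dualDistr hP hθFC hθsFC hηB
        have h3 : ((θ.inf θs).sup (etaB A B)).rel (a, x) (a, y) := by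
          rw [← eq]; exact ⟨h1, h2⟩
        have h4 : (etaB A B).rel (a, x) (a, y) := by
          refine conSup_le (θ := θ.inf θs) (φ := etaB A B) (ψ := etaB A B)
            (fun p q hh => congrArg Prod.snd (hcompθ.1 p q hh.1 hh.2))
            (fun p q hh => hh) _ _ h3
        exact h4
      · obtain ⟨m, hm1, hm2⟩ := hcompθ.2 (a, x) (a, y)
        refine ⟨m.2, ?_, ?_⟩
        · exact (θ.sup (etaB A B)).trans _ _ _ (conLE_sup_left _ _ hm1)
            (heB _ _ (rfl : (m.2 : B.carrier) = m.2))
        · exact (θs.sup (etaB A B)).trans _ _ _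
            (heBs _ _ (rfl : (m.2 : B.carrier) = m.2)) (conLE_sup_left _ _ hm2)
    have hcdB : θB.rel c' d' := by
      show (θ.sup (etaB A B)).rel (a, c') (a, d')
      refine (θ.sup (etaB A B)).trans _ _ _ (heB (a, c') (c, c') rfl) ?_
      exact (θ.sup (etaB A B)).trans _ _ _ (conLE_sup_left _ _ hcd)
        (heB (d, d') (a, d') rfl)
    have hab2 : ((etaB A B).sup θ).rel (a, a') (b, b') := by
      rw [conSup_comm]
      have h5 : (θ.sup (etaB A B)).rel (a, a') (a, b') := hGB θB hθB_FC hcdB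
      exact (θ.sup (etaB A B)).trans _ _ _ h5 (heB (a, b') (b, b') rfl)
    -- combine
    have eqf := dualDistr hP hηA hηB hθFC
    have h6 : (((etaA A B).inf (etaB A B)).sup θ).rel (a, a') (b, b') := by
      rw [← eqf]; exact ⟨hab1, hab2⟩
    refine conSup_le (θ := (etaA A B).inf (etaB A B)) (φ := θ) (ψ := θ)
      (fun p q hh => ?_) (fun p q hh => hh) _ _ h6
    have : p = q := Prod.ext hh.1 hh.2
    rw [this]; exact θ.refl q

end UA
end
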